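/- The Toads and Frogs position L T □ F R, where L is any finite sequence of T's and F's ending in F, and R is any finite sequence of T's and F's beginning with T, has game value * = {0 | 0}. -/

import Mathlib

universe u

namespace SetTheory

/-- Pre-games, as in the older Mathlib's `SetTheory.PGame` (removed from Mathlib since). -/
inductive PGame : Type (u + 1)
  | mk : ∀ α β : Type u, (α → PGame) → (β → PGame) → PGame

namespace PGame

/-- The pair (`x ≤ y`, `x ⧏ y`), defined by simultaneous recursion. -/
noncomputable def leLF : PGame.{u} → PGame.{u} → Prop × Prop :=
  PGame.rec (motive := fun _ => PGame.{u} → Prop × Prop) fun _ _ _ _ IHL IHR =>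
    PGame.rec (motive := fun _ => Prop × Prop) fun yl yr yL yR JL JR =>
      ((∀ i, (IHL i (mk yl yr yL yR)).2) ∧ ∀ j, (JR j).2,
        (∃ i, (JL i).1) ∨ ∃ j, (IHR j (mk yl yr yL yR)).1)

noncomputable instance : LE PGame.{u} := ⟨fun x y => (leLF x y).1⟩

/-- Equivalence of pre-games: `x ≤ y ∧ y ≤ x`. -/
def Equiv (x y : PGame.{u}) : Prop := x ≤ y ∧ y ≤ x

instance : HasEquiv PGame.{u} := ⟨Equiv⟩

instance : Zero PGame.{u} := ⟨⟨PEmpty, PEmpty, PEmpty.elim, PEmpty.elim⟩⟩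

/-- Negation of a pre-game. -/
def neg : PGame.{u} → PGame.{u}
  | ⟨l, r, L, R⟩ => ⟨r, l, fun i => neg (R i), fun i => neg (L i)⟩

instance : Neg PGame.{u} := ⟨neg⟩

/-- The game `* = {0 | 0}`. -/
def star : PGame.{u} := ⟨PUnit, PUnit, fun _ => 0, fun _ => 0⟩

end PGame

end SetTheory

open SetTheory

inductive Cell : Type
  | T | F | E
deriving DecidableEq

/-- Positions reachable from `l` by a single Toad (Left) move:
a Toad steps right into an empty square, or jumps over one adjacent Frog
into the empty square beyond. -/
def toadMoves : List Cell → List (List Cell)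
  | [] => []
  | c :: rest =>
    (match c, rest with
     | Cell.T, Cell.E :: r => [Cell.E :: Cell.T :: r]
     | Cell.T, Cell.F :: Cell.E :: r => [Cell.E :: Cell.F :: Cell.T :: r]
     | _, _ => []) ++ (toadMoves rest).map (c :: ·)

/-- Positions reachable from `l` by a single Frog (Right) move. -/
def frogMoves : List Cell → List (List Cell)
  | [] => []
  | c :: rest =>
    (match c, rest with
     | Cell.E, Cell.F :: r => [Cell.F :: Cell.E :: r]
     | Cell.E, Cell.T :: Cell.F :: r => [Cell.F :: Cell.T :: Cell.E :: r]
     | _, _ => []) ++ (frogMoves rest).map (c :: ·)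

/-- A weight which strictly decreases with every legal move: each Toad
contributes the number of squares strictly to its right, each Frog the number
of squares strictly to its left. -/
def wt : List Cell → ℕ
  | [] => 0
  | c :: rest =>
    (if c = Cell.T then rest.length else 0) + rest.countP (· = Cell.F) + wt rest

/-- Game tree with fuel; since `wt` strictly decreases along moves and
positions of weight `0` have no moves, `gameAux n l` is the true game
tree of `l` whenever `wt l ≤ n`. -/
def gameAux : ℕ → List Cell → PGame
  | 0, _ => 0
  | n + 1, l =>
    PGame.mk {m // m ∈ toadMoves l} {m // m ∈ frogMoves l}
      (fun m => gameAux n m.1) (fun m => gameAux n m.1)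

/-- The game (PGame) associated to a Toads and Frogs position. -/
def tfGame (l : List Cell) : PGame := gameAux (wt l + 1) l

/-- The game `{x | y}` with a single Left option `x` and single Right option `y`. -/
def gmk (x y : PGame) : PGame :=
  PGame.mk PUnit PUnit (fun _ => x) (fun _ => y)

/-- The canonical game of a natural number. -/
def natGame : ℕ → PGame
  | 0 => 0
  | n + 1 => PGame.mk PUnit PEmpty (fun _ => natGame n) (fun x => x.elim)

/-- The canonical game of an integer. -/
def intGame : ℤ → PGame
  | Int.ofNat n => natGame n
  | Int.negSucc n => -natGame (n + 1)

/-- `(TF)^b` : the block `TF` repeated `b` times. -/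
def tfBlock (b : ℕ) : List Cell := (List.replicate b [Cell.T, Cell.F]).flatten

/-!
Call a position `c □ d` with a single empty square *blocked* if no Toad stands directly left of
the hole and no Frog directly right of it, so that only jumps are possible. A Left jump
`c T F □ d ↦ c □ F T d` is answered by Right sliding the jumped Frog back, reaching the blocked
position `c F □ T d`, and symmetrically for Right; by induction on `wt`, blocked positions
are `0`. In `L T □ F R` the only moves are the two slides, to the blocked positions `L □ T F R`
and `L T F □ R`, and a game with options on both sides, all equal to `0`, is `*`.
-/

namespace SetTheory.PGame

def LeftMoves : PGame.{u} → Type u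
  | mk l _ _ _ => l

def RightMoves : PGame.{u} → Type u
  | mk _ r _ _ => r

def moveLeft : (x : PGame.{u}) → x.LeftMoves → PGame.{u}
  | mk _ _ L _ => L

def moveRight : (x : PGame.{u}) → x.RightMoves → PGame.{u}
  | mk _ _ _ R => R

def LF (x y : PGame.{u}) : Prop := (leLF x y).2

infix:50 " ⧏ " => SetTheory.PGame.LF

theorem le_iff_forall_lf {x y : PGame.{u}} :
    x ≤ y ↔ (∀ i, x.moveLeft i ⧏ y) ∧ ∀ j, x ⧏ y.moveRight j := by
  cases x; cases y; exact Iff.rfl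

theorem lf_iff_exists_le {x y : PGame.{u}} :
    x ⧏ y ↔ (∃ i, x ≤ y.moveLeft i) ∨ ∃ j, x.moveRight j ≤ y := by
  cases x; cases y; exact Iff.rfl

theorem le_zero_of_forall_exists {x : PGame.{u}}
    (h : ∀ i, ∃ j, (x.moveLeft i).moveRight j ≤ 0) : x ≤ 0 :=
  le_iff_forall_lf.2 ⟨fun i => lf_iff_exists_le.2 (Or.inr (h i)), fun j => PEmpty.elim j⟩

theorem zero_le_of_forall_exists {x : PGame.{u}}
    (h : ∀ j, ∃ i, 0 ≤ (x.moveRight j).moveLeft i) : 0 ≤ x :=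
  le_iff_forall_lf.2 ⟨fun i => PEmpty.elim i, fun j => lf_iff_exists_le.2 (Or.inl (h j))⟩

theorem equiv_star_of_forall_equiv_zero {x : PGame.{u}} (i₀ : x.LeftMoves) (j₀ : x.RightMoves)
    (hL : ∀ i, x.moveLeft i ≈ 0) (hR : ∀ j, x.moveRight j ≈ 0) : x ≈ star := by
  refine ⟨le_iff_forall_lf.2 ⟨fun i => ?_, fun _ => ?_⟩,
    le_iff_forall_lf.2 ⟨fun _ => ?_, fun j => ?_⟩⟩
  · exact lf_iff_exists_le.2 (Or.inl ⟨PUnit.unit, (hL i).1⟩)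
  · exact lf_iff_exists_le.2 (Or.inr ⟨j₀, (hR j₀).1⟩)
  · exact lf_iff_exists_le.2 (Or.inl ⟨i₀, (hL i₀).2⟩)
  · exact lf_iff_exists_le.2 (Or.inr ⟨PUnit.unit, (hR j).2⟩)

end SetTheory.PGame

open Cell

theorem mem_toadMoves_iff {l m : List Cell} :
    m ∈ toadMoves l ↔ ∃ a b, (l = a ++ T :: E :: b ∧ m = a ++ E :: T :: b) ∨
      (l = a ++ T :: F :: E :: b ∧ m = a ++ E :: F :: T :: b) := by
  induction l generalizing m with
  | nil => simp [toadMoves]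
  | cons c rest ih =>
    simp only [toadMoves, List.mem_append, List.mem_map, ih]
    constructor
    · rintro (h | ⟨m', ⟨a, b, h⟩, rfl⟩)
      · refine ⟨[], ?_⟩
        rcases c with _ | _ | _ <;> rcases rest with _ | ⟨_ | _ | _, _ | ⟨_ | _ | _, r⟩⟩ <;>
          simp_all
      · exact ⟨c :: a, b, by rcases h with ⟨rfl, rfl⟩ | ⟨rfl, rfl⟩ <;> simp⟩
    · rintro ⟨_ | ⟨c', a⟩, b, h⟩
      · left
        rcases h with ⟨h, rfl⟩ | ⟨h, rfl⟩ <;> simp_all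
      · right
        simp only [List.cons_append, List.cons.injEq] at h
        rcases h with ⟨⟨rfl, rfl⟩, rfl⟩ | ⟨⟨rfl, rfl⟩, rfl⟩ <;> exact ⟨_, ⟨a, b, by simp⟩, rfl⟩

theorem mem_frogMoves_iff {l m : List Cell} :
    m ∈ frogMoves l ↔ ∃ a b, (l = a ++ E :: F :: b ∧ m = a ++ F :: E :: b) ∨
      (l = a ++ E :: T :: F :: b ∧ m = a ++ F :: T :: E :: b) := by
  induction l generalizing m with
  | nil => simp [frogMoves]
  | cons c rest ih =>
    simp only [frogMoves, List.mem_append, List.mem_map, ih]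
    constructor
    · rintro (h | ⟨m', ⟨a, b, h⟩, rfl⟩)
      · refine ⟨[], ?_⟩
        rcases c with _ | _ | _ <;> rcases rest with _ | ⟨_ | _ | _, _ | ⟨_ | _ | _, r⟩⟩ <;>
          simp_all
      · exact ⟨c :: a, b, by rcases h with ⟨rfl, rfl⟩ | ⟨rfl, rfl⟩ <;> simp⟩
    · rintro ⟨_ | ⟨c', a⟩, b, h⟩
      · left
        rcases h with ⟨h, rfl⟩ | ⟨h, rfl⟩ <;> simp_all
      · right
        simp only [List.cons_append, List.cons.injEq] at h
        rcases h with ⟨⟨rfl, rfl⟩, rfl⟩ | ⟨⟨rfl, rfl⟩, rfl⟩ <;> exact ⟨_, ⟨a, b, by simp⟩, rfl⟩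

theorem wt_append (a b : List Cell) :
    wt (a ++ b) = wt a + wt b + a.countP (· = T) * b.length + b.countP (· = F) * a.length := by
  induction a with
  | nil => simp [wt]
  | cons c a ih =>
    cases c <;> simp [wt, ih] <;> ring

theorem wt_lt_of_mem_toadMoves {l m : List Cell} (h : m ∈ toadMoves l) : wt m < wt l := by
  obtain ⟨a, b, ⟨rfl, rfl⟩ | ⟨rfl, rfl⟩⟩ := mem_toadMoves_iff.1 h <;>
    simp [wt_append, wt] <;> omega

theorem wt_lt_of_mem_frogMoves {l m : List Cell} (h : m ∈ frogMoves l) : wt m < wt l := by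
  obtain ⟨a, b, ⟨rfl, rfl⟩ | ⟨rfl, rfl⟩⟩ := mem_frogMoves_iff.1 h <;>
    simp [wt_append, wt]
  omega

theorem gameAux_eq_gameAux {l : List Cell} {n k : ℕ} (hn : wt l < n) (hk : wt l < k) :
    gameAux n l = gameAux k l := by
  induction n generalizing l k with
  | zero => omega
  | succ n ih =>
    obtain ⟨k, rfl⟩ := Nat.exists_eq_succ_of_ne_zero (n := k) (by omega)
    simp only [gameAux]
    congr 1 <;> funext m
    · have := wt_lt_of_mem_toadMoves m.2
      exact ih (by omega) (by omega)
    · have := wt_lt_of_mem_frogMoves m.2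
      exact ih (by omega) (by omega)

theorem tfGame_eq_mk (l : List Cell) :
    tfGame l = PGame.mk {m // m ∈ toadMoves l} {m // m ∈ frogMoves l}
      (fun m => tfGame m.1) (fun m => tfGame m.1) := by
  simp only [tfGame, gameAux]
  congr 1 <;> funext m
  · exact gameAux_eq_gameAux (wt_lt_of_mem_toadMoves m.2) (Nat.lt_succ_self _)
  · exact gameAux_eq_gameAux (wt_lt_of_mem_frogMoves m.2) (Nat.lt_succ_self _)

theorem tfGame_le_zero {l : List Cell}
    (h : ∀ m ∈ toadMoves l, ∃ m' ∈ frogMoves m, tfGame m' ≤ 0) : tfGame l ≤ 0 := by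
  rw [tfGame_eq_mk]
  refine PGame.le_zero_of_forall_exists fun ⟨m, hm⟩ => ?_
  obtain ⟨m', hm', hle⟩ := h m hm
  show ∃ j, (tfGame m).moveRight j ≤ 0
  rw [tfGame_eq_mk]
  exact ⟨⟨m', hm'⟩, hle⟩

theorem zero_le_tfGame {l : List Cell}
    (h : ∀ m ∈ frogMoves l, ∃ m' ∈ toadMoves m, 0 ≤ tfGame m') : 0 ≤ tfGame l := by
  rw [tfGame_eq_mk]
  refine PGame.zero_le_of_forall_exists fun ⟨m, hm⟩ => ?_
  obtain ⟨m', hm', hle⟩ := h m hm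
  show ∃ i, 0 ≤ (tfGame m).moveLeft i
  rw [tfGame_eq_mk]
  exact ⟨⟨m', hm'⟩, hle⟩

theorem tfGame_equiv_star {l m₀ m₁ : List Cell} (h₀ : m₀ ∈ toadMoves l) (h₁ : m₁ ∈ frogMoves l)
    (hL : ∀ m ∈ toadMoves l, tfGame m ≈ 0) (hR : ∀ m ∈ frogMoves l, tfGame m ≈ 0) :
    tfGame l ≈ PGame.star := by
  rw [tfGame_eq_mk]
  exact PGame.equiv_star_of_forall_equiv_zero ⟨m₀, h₀⟩ ⟨m₁, h₁⟩ (fun m => hL m.1 m.2)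
    (fun m => hR m.1 m.2)

theorem mem_toadMoves_append_E_cons {c d m : List Cell} (hc : E ∉ c) (hd : E ∉ d) :
    m ∈ toadMoves (c ++ E :: d) ↔ (∃ a, c = a ++ [T] ∧ m = a ++ E :: T :: d) ∨
      (∃ a, c = a ++ [T, F] ∧ m = a ++ E :: F :: T :: d) := by
  rw [mem_toadMoves_iff]
  constructor
  · rintro ⟨a, b, ⟨h, rfl⟩ | ⟨h, rfl⟩⟩
    · obtain ⟨rfl, -, rfl⟩ :=
        (List.append_cons_inj_of_notMem hc hd).1 (h.trans (by simp) : _ = (a ++ [T]) ++ E :: b)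
      exact Or.inl ⟨a, rfl, rfl⟩
    · obtain ⟨rfl, -, rfl⟩ :=
        (List.append_cons_inj_of_notMem hc hd).1 (h.trans (by simp) : _ = (a ++ [T, F]) ++ E :: b)
      exact Or.inr ⟨a, rfl, rfl⟩
  · rintro (⟨a, rfl, rfl⟩ | ⟨a, rfl, rfl⟩)
    · exact ⟨a, d, Or.inl ⟨by simp, rfl⟩⟩
    · exact ⟨a, d, Or.inr ⟨by simp, rfl⟩⟩

theorem mem_frogMoves_append_E_cons {c d m : List Cell} (hc : E ∉ c) (hd : E ∉ d) :
    m ∈ frogMoves (c ++ E :: d) ↔ (∃ b, d = F :: b ∧ m = c ++ F :: E :: b) ∨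
      (∃ b, d = T :: F :: b ∧ m = c ++ F :: T :: E :: b) := by
  rw [mem_frogMoves_iff]
  constructor
  · rintro ⟨a, b, ⟨h, rfl⟩ | ⟨h, rfl⟩⟩
    · obtain ⟨rfl, -, rfl⟩ := (List.append_cons_inj_of_notMem hc hd).1 h
      exact Or.inl ⟨b, rfl, rfl⟩
    · obtain ⟨rfl, -, rfl⟩ := (List.append_cons_inj_of_notMem hc hd).1 h
      exact Or.inr ⟨b, rfl, rfl⟩
  · rintro (⟨b, rfl, rfl⟩ | ⟨b, rfl, rfl⟩)
    · exact ⟨c, b, Or.inl ⟨rfl, rfl⟩⟩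
    · exact ⟨c, b, Or.inr ⟨rfl, rfl⟩⟩

theorem tfGame_append_E_cons_equiv_zero {c d : List Cell} (hc : E ∉ c) (hd : E ∉ d)
    (hcT : c.getLast? ≠ some T) (hdF : d.head? ≠ some F) : tfGame (c ++ E :: d) ≈ 0 := by
  induction hw : wt (c ++ E :: d) using Nat.strong_induction_on generalizing c d with
  | _ w ih =>
  constructor
  · refine tfGame_le_zero fun m hm => ?_
    obtain ⟨a, rfl, rfl⟩ | ⟨a, rfl, rfl⟩ := (mem_toadMoves_append_E_cons hc hd).1 hm
    · simp at hcT
    · have hm' : (a ++ [F]) ++ E :: T :: d ∈ frogMoves (a ++ E :: F :: T :: d) :=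
        mem_frogMoves_iff.2 ⟨a, T :: d, Or.inl ⟨rfl, by simp⟩⟩
      refine ⟨_, hm', (ih _ ?_ (by simp_all) (by simp [hd]) (by simp) (by simp) rfl).1⟩
      exact hw ▸ (wt_lt_of_mem_frogMoves hm').trans (wt_lt_of_mem_toadMoves hm)
  · refine zero_le_tfGame fun m hm => ?_
    obtain ⟨b, rfl, rfl⟩ | ⟨b, rfl, rfl⟩ := (mem_frogMoves_append_E_cons hc hd).1 hm
    · simp at hdF
    · have hm' : (c ++ [F]) ++ E :: T :: b ∈ toadMoves (c ++ F :: T :: E :: b) :=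
        mem_toadMoves_iff.2 ⟨c ++ [F], b, Or.inl ⟨by simp, rfl⟩⟩
      refine ⟨_, hm', (ih _ ?_ (by simp_all) (by simp_all) (by simp) (by simp) rfl).2⟩
      exact hw ▸ (wt_lt_of_mem_toadMoves hm').trans (wt_lt_of_mem_frogMoves hm)

/-- `L T □ F R = *` for any `{T,F}`-string `L` ending in `F` and
any `{T,F}`-string `R` beginning with `T`. -/
theorem LTboxFR_eq_star (L R : List Cell)
    (hLE : Cell.E ∉ L) (hRE : Cell.E ∉ R)
    (hL : L.getLast? = some Cell.F) (hR : R.head? = some Cell.T) :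
    tfGame (L ++ [Cell.T, Cell.E, Cell.F] ++ R) ≈ PGame.star := by
  have hc : E ∉ L ++ [T] := by simp [hLE]
  have hd : E ∉ F :: R := by simp [hRE]
  rw [show L ++ [T, E, F] ++ R = (L ++ [T]) ++ E :: F :: R by simp]
  refine tfGame_equiv_star ((mem_toadMoves_append_E_cons hc hd).2 (Or.inl ⟨L, rfl, rfl⟩))
    ((mem_frogMoves_append_E_cons hc hd).2 (Or.inl ⟨R, rfl, rfl⟩)) (fun m hm => ?_) (fun m hm => ?_)
  · obtain ⟨a, ha, rfl⟩ | ⟨a, ha, rfl⟩ := (mem_toadMoves_append_E_cons hc hd).1 hm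
    · obtain rfl := List.append_cancel_right ha
      exact tfGame_append_E_cons_equiv_zero hLE (by simp [hRE]) (by simp [hL]) (by simp)
    · simpa using congrArg List.getLast? ha
  · obtain ⟨b, hb, rfl⟩ | ⟨b, hb, rfl⟩ := (mem_frogMoves_append_E_cons hc hd).1 hm
    · obtain rfl := (List.cons.inj hb).2
      simpa using tfGame_append_E_cons_equiv_zero (c := L ++ [T, F]) (d := R)
        (by simp [hLE]) hRE (by simp) (by simp [hR])
    · simp at hb
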